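/- Spider fusion for two target X-spiders (the running example): for two CNOTs sharing the same target qubit, CNOT_{1,3} ∘ CNOT_{2,3} on (ℂ²)^{⊗3} equals, up to a nonzero scalar, the map obtained by contracting Z(1,2,0) on qubit 1 and Z(1,2,0) on qubit 2 with a single fused X-spider X(3,1,0) on qubit 3 receiving both extra outputs. -/

import Mathlib

open Complex

noncomputable def plusV : Fin 2 → ℂ := fun _ => 1 / Real.sqrt 2

noncomputable def minusV : Fin 2 → ℂ :=
  fun i => if i = 0 then (1 / Real.sqrt 2 : ℂ) else -(1 / Real.sqrt 2)

/-- `Z(1,2,0) = |00⟩⟨0| + |11⟩⟨1|`. -/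
def Z12 : Matrix (Fin 2 × Fin 2) (Fin 2) ℂ :=
  fun p c => if p.1 = c ∧ p.2 = c then 1 else 0

/-- `X(3,1,0) = |+⟩⟨+++| + |−⟩⟨−−−|`. -/
noncomputable def X31 : Matrix (Fin 2) (Fin 2 × Fin 2 × Fin 2) ℂ :=
  fun c p => plusV c * plusV p.1 * plusV p.2.1 * plusV p.2.2 +
    minusV c * minusV p.1 * minusV p.2.1 * minusV p.2.2

/-- `CNOT_{1,3}` on three qubits (control 1, target 3). -/
def CN13 : Matrix (Fin 2 × Fin 2 × Fin 2) (Fin 2 × Fin 2 × Fin 2) ℂ :=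
  fun p q => if p.1 = q.1 ∧ p.2.1 = q.2.1 ∧ p.2.2 = q.1 + q.2.2 then 1 else 0

/-- `CNOT_{2,3}` on three qubits (control 2, target 3). -/
def CN23 : Matrix (Fin 2 × Fin 2 × Fin 2) (Fin 2 × Fin 2 × Fin 2) ℂ :=
  fun p q => if p.1 = q.1 ∧ p.2.1 = q.2.1 ∧ p.2.2 = q.2.1 + q.2.2 then 1 else 0

lemma s4 : ((Real.sqrt 2 : ℝ) : ℂ)⁻¹ ^ 4 = 4⁻¹ := by
  rw [inv_pow]
  norm_num
  norm_cast
  rw [show (4:ℕ) = 2*2 from rfl, pow_mul, Real.sq_sqrt (by norm_num : (0:ℝ) ≤ 2)]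
  norm_num

lemma s4' : ((Real.sqrt 2 : ℝ) : ℂ) ^ 4 = 4 := by
  norm_cast
  rw [show (4:ℕ) = 2*2 from rfl, pow_mul, Real.sq_sqrt (by norm_num : (0:ℝ) ≤ 2)]
  norm_num

lemma X31_eq (c a b d : Fin 2) :
    X31 c (a, b, d) = if c + a + b + d = 0 then 1/2 else 0 := by
  fin_cases c <;> fin_cases a <;> fin_cases b <;> fin_cases d <;>
    simp only [X31, plusV, minusV] <;> norm_num <;> ring_nf (ifUnchanged := .silent) <;>
    simp [s4, s4', (by decide : (2:Fin 2) = 0), (by decide : (3:Fin 2) ≠ 0),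
      (by decide : (4:Fin 2) = 0)] <;> norm_num

set_option maxHeartbeats 2000000 in
/-- Spider fusion for two target X-spiders: `CNOT_{1,3} ∘ CNOT_{2,3}` equals, up to a
nonzero scalar, the contraction of `Z(1,2,0)` on qubits 1 and 2 with a single fused
X-spider `X(3,1,0)` on qubit 3 receiving both extra outputs. -/
theorem fused_targets :
    ∃ s : ℂ, s ≠ 0 ∧
      CN13 * CN23 = s • fun (p q : Fin 2 × Fin 2 × Fin 2) =>
        ∑ w₁ : Fin 2, ∑ w₂ : Fin 2,
          Z12 (p.1, w₁) q.1 * Z12 (p.2.1, w₂) q.2.1 * X31 p.2.2 (q.2.2, w₁, w₂) := by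
  refine ⟨2, by norm_num, ?_⟩
  funext p q
  obtain ⟨p1, p2, p3⟩ := p
  obtain ⟨q1, q2, q3⟩ := q
  simp only [Matrix.mul_apply, Pi.smul_apply, smul_eq_mul]
  fin_cases p1 <;> fin_cases p2 <;> fin_cases p3 <;>
    fin_cases q1 <;> fin_cases q2 <;> fin_cases q3 <;>
      simp [Z12, CN13, CN23, X31_eq, Fintype.sum_prod_type, Fin.sum_univ_two]
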